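/- arXiv:1205.0513 — 2 statements merged into one kernel-verified Lean document; each statement's English description precedes it below -/
import Mathlib

section
/- Let H be a group of automorphisms of a graph Γ with vertex set V. Suppose there exist σ ∈ V, a σ-projection Π_σ on Γ, and a nonempty finite Π_σ-convex subset R ⊆ V. Suppose moreover that the orbit set HR = {hρ : h ∈ H, ρ ∈ R} is finite, that for every σ' in the orbit S = Hσ there is a σ'-projection Π_{σ'} for which R is Π_{σ'}-convex, and that the family {Π_{σ'}}_{σ'∈S} is H-equivariant. Then the subgraph of Γ induced on HR is dismantlable and Γ contains an H-invariant clique. -/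
/-!
The orbit `Q = HR` is `Π_σ`-convex: equivariance carries the convexity of `R` for `Π_{g⁻¹σ}`
to convexity at `gρ` for `Π_σ`. A finite `Π_σ`-convex set dismantles: an exposed vertex
`ρ ≠ σ` is dominated by the member of its pair lying in the set, and acyclicity of `Π_σ`
keeps that member distinct from `ρ`. Convexity is lost once vertices are removed, but each
removed vertex can be replaced by its dominator, which is reached from it by `Π`-steps, so
acyclicity survives. Finally, in a finite dismantlable `H`-invariant set, deleting all
strictly dominated vertices keeps it dismantlable and `H`-invariant, and a dismantlable set
with only mutual dominations is a clique; induction on the size gives an invariant clique.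
-/

open SimpleGraph

variable {V : Type*}

/-- The closed neighbourhood of a vertex: the vertex together with all its neighbours. -/
def closedNbhd (G : SimpleGraph V) (ρ : V) : Set V := insert ρ {w | G.Adj ρ w}

/-- `ρ` is dominated by `π` within the subgraph of `G` induced on `S`:
`π ∈ S`, `π ≠ ρ`, and `N(ρ) ∩ S ⊆ N(π)`. -/
def DominatedIn (G : SimpleGraph V) (S : Set V) (ρ π : V) : Prop :=
  π ∈ S ∧ π ≠ ρ ∧ ∀ w ∈ S, w ∈ closedNbhd G ρ → w ∈ closedNbhd G π

/-- The subgraph of `G` induced on `S` is dismantlable: the vertices of `S` can be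
arranged in a (finite) list such that each vertex except the last is dominated in the
subgraph induced on it and the later vertices. -/
def DismantlableOn (G : SimpleGraph V) (S : Set V) : Prop :=
  ∃ l : List V, l.Nodup ∧ (∀ v, v ∈ l ↔ v ∈ S) ∧
    ∀ (i : ℕ) (h : i < l.length), i < l.length - 1 →
      ∃ π, DominatedIn G {w | w ∈ l.drop i} (l[i]'h) π

/-- A graph is dismantlable if the subgraph induced on all of its vertices is. -/
def Dismantlable (G : SimpleGraph V) : Prop := DismantlableOn G Set.univ

/-- The set `Π*(ρ)` of all vertices appearing in pairs of `Π ρ`. -/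
def PiStar (Pr : V → Finset (Sym2 V)) (ρ : V) : Set V := {v | ∃ p ∈ Pr ρ, v ∈ p}

/-- `Pr` is a `σ`-projection: it assigns to each vertex `ρ ≠ σ` a nonempty finite set of
unordered pairs of vertices such that (i) every finite set `R` containing a vertex other
than `σ` has an exposed vertex, and (ii) there is no cycle `ρ₀, …, ρ_{m-1}` with
`ρ_{i+1} ∈ Π*(ρ_i)` (indices mod `m`). -/
structure IsSigmaProjection (G : SimpleGraph V) (σ : V) (Pr : V → Finset (Sym2 V)) : Prop where
  nonempty : ∀ ρ, ρ ≠ σ → (Pr ρ).Nonempty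
  exposed : ∀ R : Finset V, (∃ ρ ∈ R, ρ ≠ σ) →
    ∃ ρ ∈ R, ρ ≠ σ ∧ ∃ p ∈ Pr ρ, ∀ π ∈ p,
      ∀ w ∈ R, w ∈ closedNbhd G ρ → w ∈ closedNbhd G π
  acyclic : ¬ ∃ m : ℕ, 0 < m ∧ ∃ f : ZMod m → V,
    ∀ i, f i ≠ σ ∧ f (i + 1) ∈ PiStar Pr (f i)

/-- `R` is `Π`-convex: for every `ρ ∈ R` other than `σ`, each pair in `Π ρ` meets `R`. -/
def PiConvex (σ : V) (Pr : V → Finset (Sym2 V)) (R : Set V) : Prop :=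
  ∀ ρ ∈ R, ρ ≠ σ → ∀ p ∈ Pr ρ, ∃ v ∈ p, v ∈ R

/-- The orbit `HR` of a set `R` under a group action. -/
def orbitSet (H : Type*) [Group H] [MulAction H V] (R : Set V) : Set V :=
  {x | ∃ h : H, ∃ ρ ∈ R, x = h • ρ}

/-- The geometric realization of the flag complex of `G` inside `ℝ^V`: the union over
all (nonempty) cliques of the convex hulls of the corresponding standard basis vectors. -/
def flagRealization [DecidableEq V] (G : SimpleGraph V) : Set (V → ℝ) :=
  ⋃ (Δ : Set V) (_ : Δ.Nonempty) (_ : G.IsClique Δ),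
    convexHull ℝ ((fun v => (Pi.single v 1 : V → ℝ)) '' Δ)

/-- A walk is a geodesic if its length equals the distance between its endpoints. -/
def IsGeodesic (G : SimpleGraph V) {u v : V} (p : G.Walk u v) : Prop :=
  p.length = G.dist u v

/-- `G` is `δ`-hyperbolic: for any geodesic triangle, each vertex on one side is within
distance `δ` of some vertex on the union of the other two sides. -/
def Hyperbolic (G : SimpleGraph V) (δ : ℕ) : Prop :=
  ∀ (u v w : V) (p : G.Walk u v) (q : G.Walk v w) (r : G.Walk w u),
    IsGeodesic G p → IsGeodesic G q → IsGeodesic G r →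
    ∀ t ∈ p.support, ∃ s, (s ∈ q.support ∨ s ∈ r.support) ∧ G.dist t s ≤ δ

/-- The Rips graph `Γ_D`: same vertices, two distinct vertices adjacent iff their
graph distance in `G` is at most `D`. -/
def ripsGraph (G : SimpleGraph V) (D : ℕ) : SimpleGraph V where
  Adj u v := u ≠ v ∧ G.dist u v ≤ D
  symm := by
    constructor
    intro u v h
    exact ⟨h.1.symm, by rw [SimpleGraph.dist_comm]; exact h.2⟩
  loopless := by
    constructor
    intro v h
    exact h.1 rfl

/-- The ball of radius `r` around a set `C` of vertices. -/
def ballSet (G : SimpleGraph V) (C : Set V) (r : ℕ) : Set V :=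
  {v | ∃ c ∈ C, G.dist v c ≤ r}

section ClosedNbhd

variable {G : SimpleGraph V}

lemma mem_closedNbhd {ρ w : V} : w ∈ closedNbhd G ρ ↔ w = ρ ∨ G.Adj ρ w := Iff.rfl

lemma self_mem_closedNbhd (ρ : V) : ρ ∈ closedNbhd G ρ := Or.inl rfl

lemma mem_closedNbhd_comm {ρ w : V} : w ∈ closedNbhd G ρ ↔ ρ ∈ closedNbhd G w := by
  simp only [mem_closedNbhd, eq_comm (a := w), G.adj_comm ρ w]

def NbhdSubsetIn (G : SimpleGraph V) (S : Set V) (u v : V) : Prop :=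
  ∀ w ∈ S, w ∈ closedNbhd G u → w ∈ closedNbhd G v

namespace NbhdSubsetIn

variable {S T : Set V} {u v x : V}

lemma refl (u : V) : NbhdSubsetIn G S u u := fun _ _ h => h

lemma trans (huv : NbhdSubsetIn G S u v) (hvx : NbhdSubsetIn G S v x) :
    NbhdSubsetIn G S u x := fun w hw h => hvx w hw (huv w hw h)

lemma mono (h : NbhdSubsetIn G S u v) (hTS : T ⊆ S) : NbhdSubsetIn G T u v :=
  fun w hw => h w (hTS hw)

end NbhdSubsetIn

lemma DominatedIn.nbhdSubsetIn {S : Set V} {ρ π : V} (h : DominatedIn G S ρ π) :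
    NbhdSubsetIn G S ρ π := h.2.2

end ClosedNbhd

section Dismantling

variable {G : SimpleGraph V} {S : Set V}

lemma dismantlableOn_of_subsingleton (hS : S.Subsingleton) : DismantlableOn G S := by
  obtain rfl | ⟨a, rfl⟩ := hS.eq_empty_or_singleton
  · exact ⟨[], List.nodup_nil, by simp, by simp⟩
  · exact ⟨[a], List.nodup_singleton a, by simp, by simp⟩

lemma DismantlableOn.finite (hS : DismantlableOn G S) : S.Finite := by
  obtain ⟨l, -, hmem, -⟩ := hS
  exact (List.finite_toSet l).subset fun v hv => (hmem v).2 hv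

lemma DismantlableOn.of_sdiff_singleton {a π : V} (ha : a ∈ S) (hπ : DominatedIn G S a π)
    (h : DismantlableOn G (S \ {a})) : DismantlableOn G S := by
  obtain ⟨l, hnd, hmem, hdom⟩ := h
  have hS : {w | w ∈ a :: l} = S := by
    ext w
    by_cases hw : w = a <;> simp [hw, hmem, ha]
  refine ⟨a :: l, List.nodup_cons.2 ⟨fun h => ((hmem a).1 h).2 rfl, hnd⟩,
    fun w => by rw [← hS]; rfl, ?_⟩
  rintro (_ | i) hi hi'
  · show ∃ π, DominatedIn G {w | w ∈ a :: l} a π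
    exact ⟨π, hS ▸ hπ⟩
  · exact hdom i (by simpa using hi) (by simp at hi'; omega)

lemma DismantlableOn.induction_on {motive : ∀ S : Set V, DismantlableOn G S → Prop}
    (hS : DismantlableOn G S)
    (subsingleton : ∀ (S : Set V) (hS : S.Subsingleton),
      motive S (dismantlableOn_of_subsingleton hS))
    (dominated : ∀ (S : Set V) (a π : V) (ha : a ∈ S) (hπ : DominatedIn G S a π)
      (hSa : DismantlableOn G (S \ {a})), motive (S \ {a}) hSa →
        motive S (hSa.of_sdiff_singleton ha hπ)) : motive S hS := by
  obtain ⟨l, hnd, hmem, hdom⟩ := hS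
  induction l generalizing S with
  | nil => exact subsingleton S fun x hx => by simp [← hmem x] at hx
  | cons a t ih =>
    rcases t with _ | ⟨b, t⟩
    · exact subsingleton S fun x hx y hy => by simp_all [← hmem]
    have ha : a ∈ S := (hmem a).1 (by simp)
    have hnd' := (List.nodup_cons.1 hnd).2
    have hmem' : ∀ v, v ∈ b :: t ↔ v ∈ S \ {a} := fun v => by
      rw [Set.mem_sdiff, ← hmem, Set.mem_singleton_iff, List.mem_cons (l := b :: t)]
      constructor
      · exact fun hv => ⟨Or.inr hv, fun h => (List.nodup_cons.1 hnd).1 (h ▸ hv)⟩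
      · rintro ⟨rfl | hv, hva⟩
        exacts [absurd rfl hva, hv]
    have hdom' : ∀ (i : ℕ) (h : i < (b :: t).length), i < (b :: t).length - 1 →
        ∃ π, DominatedIn G {w | w ∈ (b :: t).drop i} ((b :: t)[i]'h) π := fun i hi hi' =>
      hdom (i + 1) (by simpa using hi) (by simp at hi' ⊢; omega)
    obtain ⟨π, hπ⟩ := hdom 0 (by simp) (by simp)
    have hS : {w | w ∈ (a :: b :: t).drop 0} = S := Set.ext hmem
    rw [hS] at hπ
    exact dominated S a π ha hπ ⟨b :: t, hnd', hmem', hdom'⟩ (ih hnd' hmem' hdom')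

lemma DismantlableOn.image {f : V → V} (hS : DismantlableOn G S) (hf : S.InjOn f)
    (hG : ∀ u ∈ S, ∀ v ∈ S, f v ∈ closedNbhd G (f u) ↔ v ∈ closedNbhd G u) :
    DismantlableOn G (f '' S) := by
  induction hS using DismantlableOn.induction_on with
  | subsingleton S hS => exact dismantlableOn_of_subsingleton (hS.image f)
  | dominated S a π ha hπ _ ih =>
    obtain ⟨hπS, hπa, hdom⟩ := hπ
    have hdiff : f '' (S \ {a}) = f '' S \ {f a} := by
      rw [hf.image_sdiff_subset (Set.singleton_subset_iff.2 ha), Set.image_singleton]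
    refine .of_sdiff_singleton (Set.mem_image_of_mem f ha)
      ⟨Set.mem_image_of_mem f hπS, fun h => hπa (hf hπS ha h), ?_⟩
      (hdiff ▸ ih (hf.mono Set.sdiff_subset) fun u hu v hv => hG u hu.1 v hv.1)
    rintro _ ⟨w, hw, rfl⟩ hwa
    exact (hG π hπS w hw).2 (hdom w hw ((hG a ha w hw).1 hwa))

lemma swap_mem_closedNbhd_swap [DecidableEq V] {a b : V} (ha : a ∈ S) (hb : b ∈ S)
    (htwin : ∀ w ∈ S, w ∈ closedNbhd G a ↔ w ∈ closedNbhd G b) {u v : V} (hu : u ∈ S)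
    (hv : v ∈ S) :
    Equiv.swap a b v ∈ closedNbhd G (Equiv.swap a b u) ↔ v ∈ closedNbhd G u := by
  have hswap : ∀ x ∈ S, ∀ w ∈ S, w ∈ closedNbhd G (Equiv.swap a b x) ↔ w ∈ closedNbhd G x := by
    intro x _ w hw
    rcases eq_or_ne x a with rfl | hxa
    · rw [Equiv.swap_apply_left, htwin w hw]
    rcases eq_or_ne x b with rfl | hxb
    · rw [Equiv.swap_apply_right, htwin w hw]
    · rw [Equiv.swap_apply_of_ne_of_ne hxa hxb]
  have hmem : ∀ x ∈ S, Equiv.swap a b x ∈ S := fun x hx => by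
    rcases eq_or_ne x a with rfl | hxa
    · simpa using hb
    rcases eq_or_ne x b with rfl | hxb
    · simpa using ha
    · rwa [Equiv.swap_apply_of_ne_of_ne hxa hxb]
  rw [hswap u hu _ (hmem v hv), mem_closedNbhd_comm, hswap v hv u hu, mem_closedNbhd_comm]

lemma DismantlableOn.sdiff_singleton_of_twin {a b : V}
    (h : DismantlableOn G (S \ {a})) (ha : a ∈ S) (hb : b ∈ S) (hab : a ≠ b)
    (htwin : ∀ w ∈ S, w ∈ closedNbhd G a ↔ w ∈ closedNbhd G b) :
    DismantlableOn G (S \ {b}) := by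
  classical
  have himage : Equiv.swap b a '' (S \ {a}) = S \ {b} := by
    have hb' : b ∈ S \ {a} := ⟨hb, hab.symm⟩
    rw [Equiv.image_swap_of_mem_of_notMem hb' fun h => h.2 rfl,
      Set.insert_sdiff_singleton, Set.insert_eq_of_mem ha]
  rw [← himage]
  exact h.image (Equiv.swap b a).injective.injOn fun u hu v hv =>
    swap_mem_closedNbhd_swap hb ha (fun w hw => (htwin w hw).symm) hu.1 hv.1

lemma DominatedIn.exists_dominatedIn_sdiff {a π u v : V} (hπ : DominatedIn G S a π)
    (hv : DominatedIn G S u v) (hnot_twin : ¬(π = u ∧ v = a)) :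
    ∃ w, DominatedIn G (S \ {a}) u w := by
  by_cases hva : v = a
  · subst hva
    have hπu : π ≠ u := fun h => hnot_twin ⟨h, rfl⟩
    exact ⟨π, ⟨hπ.1, hπ.2.1⟩, hπu,
      (hv.nbhdSubsetIn.trans hπ.nbhdSubsetIn).mono Set.sdiff_subset⟩
  · exact ⟨v, ⟨hv.1, hva⟩, hv.2.1, hv.nbhdSubsetIn.mono Set.sdiff_subset⟩

lemma DismantlableOn.sdiff_singleton (hS : DismantlableOn G S) {u v : V}
    (hu : u ∈ S) (hv : DominatedIn G S u v) : DismantlableOn G (S \ {u}) := by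
  induction hS using DismantlableOn.induction_on generalizing u v with
  | subsingleton S hS => exact absurd (hS hv.1 hu) hv.2.1
  | dominated S a π ha hπ hSa ih =>
    rcases eq_or_ne u a with rfl | hua
    · exact hSa
    by_cases htwin : π = u ∧ v = a
    · obtain ⟨rfl, rfl⟩ := htwin
      exact hSa.sdiff_singleton_of_twin ha hu hua.symm fun w hw =>
        ⟨hπ.nbhdSubsetIn w hw, hv.nbhdSubsetIn w hw⟩
    obtain ⟨w, hw⟩ := hπ.exists_dominatedIn_sdiff hv htwin
    obtain ⟨π', hπ'⟩ := hv.exists_dominatedIn_sdiff hπ (mt And.symm htwin)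
    refine .of_sdiff_singleton ⟨ha, hua.symm⟩ hπ' ?_
    rw [Set.sdiff_sdiff_comm]
    exact ih ⟨hu, hua⟩ hw

lemma DismantlableOn.sdiff {E : Set V} (hS : DismantlableOn G S) (hE : E.Finite)
    (hdom : ∀ u ∈ E, ∃ w ∈ S \ E, NbhdSubsetIn G S u w) : DismantlableOn G (S \ E) := by
  classical
  induction E, hE using Set.Finite.induction_on with
  | empty => simpa using hS
  | @insert u E huE _ ih =>
    have hSE := ih fun x hx => (hdom x (.inr hx)).imp fun w hw =>
      ⟨⟨hw.1.1, fun h => hw.1.2 (.inr h)⟩, hw.2⟩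
    obtain ⟨w, ⟨hwS, hwE⟩, huw⟩ := hdom u (.inl rfl)
    by_cases hu : u ∈ S
    · rw [Set.insert_eq, Set.union_comm, ← Set.sdiff_sdiff]
      refine hSE.sdiff_singleton ⟨hu, huE⟩
        ⟨⟨hwS, fun h => hwE (.inr h)⟩, fun h => hwE (.inl h), huw.mono Set.sdiff_subset⟩
    · rwa [Set.insert_eq, Set.union_comm, ← Set.sdiff_sdiff, Set.sdiff_singleton_eq_self]
      exact fun h => hu h.1

end Dismantling

section Clique

variable {G : SimpleGraph V} {S : Set V}

lemma NbhdSubsetIn.of_sdiff_twin {a π u v : V} (hπ : π ∈ S \ {a}) (hv : v ∈ S)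
    (htwin : ∀ w ∈ S, w ∈ closedNbhd G a ↔ w ∈ closedNbhd G π) (hu : u ∈ S)
    (huv : NbhdSubsetIn G (S \ {a}) u v) : NbhdSubsetIn G S u v := by
  intro w hw hwu
  by_cases hwa : w = a
  · subst hwa
    have hπu : π ∈ closedNbhd G u :=
      mem_closedNbhd_comm.1 ((htwin u hu).1 (mem_closedNbhd_comm.1 hwu))
    exact mem_closedNbhd_comm.1 ((htwin v hv).2 (mem_closedNbhd_comm.1 (huv π hπ hπu)))
  · exact huv w ⟨hw, hwa⟩ hwu

lemma DismantlableOn.isClique (hS : DismantlableOn G S)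
    (hmutual : ∀ u ∈ S, ∀ v ∈ S, NbhdSubsetIn G S u v → NbhdSubsetIn G S v u) :
    G.IsClique S := by
  induction hS using DismantlableOn.induction_on with
  | subsingleton S hS => exact hS.pairwise _
  | dominated S a π ha hπ _ ih =>
    obtain ⟨hπS, hπa, haπ⟩ := hπ
    have htwin : ∀ w ∈ S, w ∈ closedNbhd G a ↔ w ∈ closedNbhd G π := fun w hw =>
      ⟨haπ w hw, hmutual a ha π hπS haπ w hw⟩
    have hclique : G.IsClique (S \ {a}) := ih fun u hu v hv huv =>
      (hmutual u hu.1 v hv.1 (huv.of_sdiff_twin ⟨hπS, hπa⟩ hv.1 htwin hu.1)).mono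
        Set.sdiff_subset
    rw [← Set.insert_eq_of_mem ha, ← Set.insert_sdiff_singleton, SimpleGraph.isClique_insert]
    refine ⟨hclique, fun b hb hab => ?_⟩
    have hbπ : b ∈ closedNbhd G π := by
      rcases eq_or_ne b π with rfl | hbπ
      · exact self_mem_closedNbhd b
      · exact Or.inr (hclique ⟨hπS, hπa⟩ hb hbπ.symm)
    exact (mem_closedNbhd.1 ((htwin b hb.1).2 hbπ)).resolve_left hab.symm

lemma exists_nbhdSubsetIn_maximal (hS : S.Finite) {u : V} (hu : u ∈ S) :
    ∃ w ∈ S, NbhdSubsetIn G S u w ∧ ∀ z ∈ S, NbhdSubsetIn G S w z → NbhdSubsetIn G S z w := by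
  have hsubset : ∀ x y, NbhdSubsetIn G S x y ↔ S ∩ closedNbhd G x ⊆ S ∩ closedNbhd G y :=
    fun x y => ⟨fun h w hw => ⟨hw.1, h w hw.1 hw.2⟩, fun h w hw hwx => (h ⟨hw, hwx⟩).2⟩
  obtain ⟨_, hle, ⟨w, hw, rfl⟩, hmax⟩ :=
    (hS.image fun x => S ∩ closedNbhd G x).exists_le_maximal (Set.mem_image_of_mem _ hu)
  refine ⟨w, hw, (hsubset u w).2 hle, fun z hz hwz => (hsubset z w).2 ?_⟩
  exact hmax (Set.mem_image_of_mem _ hz) ((hsubset w z).1 hwz)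

end Clique

def strictlyDominatedIn (G : SimpleGraph V) (S : Set V) : Set V :=
  {u ∈ S | ∃ v ∈ S, NbhdSubsetIn G S u v ∧ ¬NbhdSubsetIn G S v u}

section Equivariant

variable {H : Type*} [Group H] [MulAction H V] {G : SimpleGraph V} {S : Set V}

lemma smul_mem_closedNbhd_smul (hact : ∀ (h : H) (u v : V), G.Adj (h • u) (h • v) ↔ G.Adj u v)
    (h : H) {u w : V} : h • w ∈ closedNbhd G (h • u) ↔ w ∈ closedNbhd G u := by
  simp only [mem_closedNbhd, smul_left_cancel_iff, hact]

lemma nbhdSubsetIn_smul_iff (hact : ∀ (h : H) (u v : V), G.Adj (h • u) (h • v) ↔ G.Adj u v)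
    (hS : ∀ h : H, ∀ x ∈ S, h • x ∈ S) (h : H) {u v : V} :
    NbhdSubsetIn G S (h • u) (h • v) ↔ NbhdSubsetIn G S u v := by
  refine ⟨fun huv w hw hwu => ?_, fun huv w hw hwu => ?_⟩
  · rw [← smul_mem_closedNbhd_smul hact h] at hwu ⊢
    exact huv _ (hS h w hw) hwu
  · rw [← smul_inv_smul h w, smul_mem_closedNbhd_smul hact] at hwu ⊢
    exact huv _ (hS h⁻¹ w hw) hwu

lemma smul_mem_strictlyDominatedIn
    (hact : ∀ (h : H) (u v : V), G.Adj (h • u) (h • v) ↔ G.Adj u v)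
    (hS : ∀ h : H, ∀ x ∈ S, h • x ∈ S) (h : H) {u : V} (hu : u ∈ strictlyDominatedIn G S) :
    h • u ∈ strictlyDominatedIn G S := by
  obtain ⟨huS, v, hvS, huv, hvu⟩ := hu
  refine ⟨hS h u huS, h • v, hS h v hvS, ?_, ?_⟩ <;>
    rwa [nbhdSubsetIn_smul_iff hact hS]

lemma image_smul_eq_of_forall_smul_mem (hS : ∀ h : H, ∀ x ∈ S, h • x ∈ S) (h : H) :
    (fun v => h • v) '' S = S := by
  refine (Set.image_subset_iff.2 fun x hx => hS h x hx).antisymm fun x hx => ?_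
  exact ⟨h⁻¹ • x, hS h⁻¹ x hx, smul_inv_smul h x⟩

/-- All strictly dominated vertices can be deleted together, since each is dominated by a
vertex that is not strictly dominated; this deletion commutes with `H`. -/
theorem DismantlableOn.exists_invariant_isClique
    (hact : ∀ (h : H) (u v : V), G.Adj (h • u) (h • v) ↔ G.Adj u v)
    (hS : DismantlableOn G S) (hne : S.Nonempty) (hinv : ∀ h : H, ∀ x ∈ S, h • x ∈ S) :
    ∃ Δ : Set V, Δ.Nonempty ∧ G.IsClique Δ ∧ ∀ h : H, (fun v => h • v) '' Δ = Δ := by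
  induction hSn : S.ncard using Nat.strong_induction_on generalizing S with
  | _ n ih =>
  set D := strictlyDominatedIn G S
  have hfin : S.Finite := hS.finite
  rcases D.eq_empty_or_nonempty with hD | ⟨d, hd⟩
  · refine ⟨S, hne, hS.isClique fun u hu v hv huv => ?_, image_smul_eq_of_forall_smul_mem hinv⟩
    by_contra hvu
    exact hD.subset ⟨hu, v, hv, huv, hvu⟩
  have hmax : ∀ u ∈ S, ∃ w ∈ S \ D, NbhdSubsetIn G S u w := fun u hu => by
    obtain ⟨w, hw, huw, hmax⟩ := exists_nbhdSubsetIn_maximal hfin hu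
    exact ⟨w, ⟨hw, fun ⟨_, z, hz, hwz, hzw⟩ => hzw (hmax z hz hwz)⟩, huw⟩
  have hlt : (S \ D).ncard < n :=
    hSn ▸ Set.ncard_lt_ncard (Set.sdiff_ssubset_left_iff.2 ⟨d, hd.1, hd⟩) hfin
  have hdis : DismantlableOn G (S \ D) :=
    hS.sdiff (hfin.subset fun x hx => hx.1) fun u hu => hmax u hu.1
  have hinv' : ∀ h : H, ∀ x ∈ S \ D, h • x ∈ S \ D := fun h x hx =>
    ⟨hinv h x hx.1, fun hhx => hx.2 <| by
      simpa using smul_mem_strictlyDominatedIn hact hinv h⁻¹ hhx⟩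
  obtain ⟨u, hu⟩ := hne
  obtain ⟨w, hw, -⟩ := hmax u hu
  exact ih _ hlt hdis ⟨w, hw⟩ hinv' rfl

end Equivariant

lemma Relation.TransGen.exists_seq {α : Type*} {r : α → α → Prop} {x y : α}
    (h : Relation.TransGen r x y) :
    ∃ n, ∃ f : ℕ → α, f 0 = x ∧ f (n + 1) = y ∧ ∀ i ≤ n, r (f i) (f (i + 1)) := by
  induction h using Relation.TransGen.head_induction_on with
  | @single a hay => exact ⟨0, fun i => if i = 0 then a else y, by simp, by simp, by simpa⟩
  | @head a b hab _ ih =>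
    obtain ⟨n, f, hf0, hfn, hf⟩ := ih
    refine ⟨n + 1, fun i => if i = 0 then a else f (i - 1), by simp, by simpa, ?_⟩
    rintro (_ | i) hi
    · simpa [hf0] using hab
    · simpa using hf i (by omega)

lemma Relation.TransGen.exists_zmod_cycle {α : Type*} {r : α → α → Prop} {x : α}
    (h : Relation.TransGen r x x) :
    ∃ m : ℕ, 0 < m ∧ ∃ f : ZMod m → α, ∀ i, r (f i) (f (i + 1)) := by
  obtain ⟨n, f, hf0, hfn, hf⟩ := h.exists_seq
  refine ⟨n + 1, n.succ_pos, fun i => f i.val, fun i => ?_⟩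
  have hi : i.val ≤ n := Nat.lt_succ_iff.1 (ZMod.val_lt i)
  have hsucc : f (i + 1).val = f (i.val + 1) := by
    rw [ZMod.val_add, ZMod.val_one_eq_one_mod, Nat.add_mod_mod]
    rcases hi.lt_or_eq with hlt | heq
    · rw [Nat.mod_eq_of_lt (by omega)]
    · rw [heq, Nat.mod_self, hf0, hfn]
  simpa only [hsucc] using hf _ hi

section Projection

variable {G : SimpleGraph V} {σ : V} {Pr : V → Finset (Sym2 V)} {Q T : Set V}

/-- `x → y` is a step of the relation whose cycles a `σ`-projection forbids. -/
def PiStep (σ : V) (Pr : V → Finset (Sym2 V)) (x y : V) : Prop :=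
  x ≠ σ ∧ y ∈ PiStar Pr x

lemma IsSigmaProjection.not_transGen (hP : IsSigmaProjection G σ Pr) (x : V) :
    ¬Relation.TransGen (PiStep σ Pr) x x := fun h => hP.acyclic h.exists_zmod_cycle

/-- A substitute for `Π`-convexity of `T ⊆ Q` when `Q` is `Π`-convex: every vertex of `Q`
has a stand-in in `T`, reached by `Π`-steps, that dominates it within `T`. -/
def RetractsOnto (G : SimpleGraph V) (σ : V) (Pr : V → Finset (Sym2 V)) (Q T : Set V) : Prop :=
  ∀ x ∈ Q, ∃ y ∈ T, Relation.ReflTransGen (PiStep σ Pr) x y ∧ NbhdSubsetIn G T x y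

lemma retractsOnto_self : RetractsOnto G σ Pr Q Q :=
  fun x hx => ⟨x, hx, .refl, .refl x⟩

lemma RetractsOnto.sdiff_singleton (h : RetractsOnto G σ Pr Q T) {ρ π : V}
    (hρπ : Relation.TransGen (PiStep σ Pr) ρ π) (hπ : DominatedIn G T ρ π) :
    RetractsOnto G σ Pr Q (T \ {ρ}) := by
  intro x hx
  obtain ⟨y, hyT, hxy, hxyN⟩ := h x hx
  by_cases hyρ : y = ρ
  · subst hyρ
    exact ⟨π, ⟨hπ.1, hπ.2.1⟩, hxy.trans hρπ.to_reflTransGen,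
      (hxyN.trans hπ.nbhdSubsetIn).mono Set.sdiff_subset⟩
  · exact ⟨y, ⟨hyT, hyρ⟩, hxy, hxyN.mono Set.sdiff_subset⟩

/-- An exposed vertex `ρ` of `T` is dominated by the member `v ∈ Q` of its pair that
convexity provides, and hence by the retract of `v` in `T`, which differs from `ρ` by
acyclicity. -/
lemma RetractsOnto.exists_dominatedIn (h : RetractsOnto G σ Pr Q T)
    (hP : IsSigmaProjection G σ Pr) (hQ : PiConvex σ Pr Q) (hT : T.Finite) (hTQ : T ⊆ Q)
    {ρ₀ : V} (hρ₀ : ρ₀ ∈ T) (hρ₀σ : ρ₀ ≠ σ) :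
    ∃ ρ ∈ T, ∃ π, Relation.TransGen (PiStep σ Pr) ρ π ∧ DominatedIn G T ρ π := by
  obtain ⟨ρ, hρT, hρσ, p, hp, hexp⟩ :=
    hP.exposed hT.toFinset ⟨ρ₀, hT.mem_toFinset.2 hρ₀, hρ₀σ⟩
  rw [hT.mem_toFinset] at hρT
  obtain ⟨v, hvp, hvQ⟩ := hQ ρ (hTQ hρT) hρσ p hp
  obtain ⟨π, hπT, hvπ, hvπN⟩ := h v hvQ
  have hρπ : Relation.TransGen (PiStep σ Pr) ρ π := .head' ⟨hρσ, p, hp, hvp⟩ hvπ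
  refine ⟨ρ, hρT, π, hρπ, hπT, fun hπρ => hP.not_transGen ρ (hπρ ▸ hρπ), ?_⟩
  exact fun w hw hwρ => hvπN w hw (hexp v hvp w (hT.mem_toFinset.2 hw) hwρ)

lemma RetractsOnto.dismantlableOn (h : RetractsOnto G σ Pr Q T)
    (hP : IsSigmaProjection G σ Pr) (hQ : PiConvex σ Pr Q) (hT : T.Finite) (hTQ : T ⊆ Q) :
    DismantlableOn G T := by
  induction hn : T.ncard using Nat.strong_induction_on generalizing T with
  | _ n ih =>
  by_cases hσ : ∃ ρ ∈ T, ρ ≠ σ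
  · obtain ⟨ρ₀, hρ₀, hρ₀σ⟩ := hσ
    obtain ⟨ρ, hρT, π, hρπ, hπ⟩ := h.exists_dominatedIn hP hQ hT hTQ hρ₀ hρ₀σ
    exact .of_sdiff_singleton hρT hπ <| ih _ (hn ▸ Set.ncard_sdiff_singleton_lt_of_mem hρT hT)
      (h.sdiff_singleton hρπ hπ) hT.sdiff (Set.sdiff_subset.trans hTQ) rfl
  · push Not at hσ
    exact dismantlableOn_of_subsingleton fun x hx y hy => (hσ x hx).trans (hσ y hy).symm

lemma IsSigmaProjection.dismantlableOn_of_piConvex (hP : IsSigmaProjection G σ Pr)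
    (hQ : PiConvex σ Pr Q) (hfin : Q.Finite) : DismantlableOn G Q :=
  retractsOnto_self.dismantlableOn hP hQ hfin subset_rfl

end Projection

section Orbit

variable {H : Type*} [Group H] [MulAction H V] {R : Set V}

lemma subset_orbitSet : R ⊆ orbitSet H R := fun ρ hρ => ⟨1, ρ, hρ, (one_smul H ρ).symm⟩

lemma smul_mem_orbitSet (h : H) {x : V} (hx : x ∈ orbitSet H R) : h • x ∈ orbitSet H R := by
  obtain ⟨g, ρ, hρ, rfl⟩ := hx
  exact ⟨h * g, ρ, hρ, (mul_smul h g ρ).symm⟩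

lemma piConvex_orbitSet [DecidableEq V] {σ : V} {Pr : V → V → Finset (Sym2 V)}
    (hconv : ∀ σ' ∈ MulAction.orbit H σ, PiConvex σ' (Pr σ') R)
    (hequiv : ∀ (h : H), ∀ σ' ∈ MulAction.orbit H σ, ∀ ρ, ρ ≠ σ' →
      (Pr σ' ρ).image (Sym2.map (fun v => h • v)) = Pr (h • σ') (h • ρ)) :
    PiConvex σ (Pr σ) (orbitSet H R) := by
  rintro _ ⟨g, ρ, hρ, rfl⟩ hρσ p hp
  have hσ' : g⁻¹ • σ ∈ MulAction.orbit H σ := MulAction.mem_orbit σ g⁻¹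
  have hρσ' : ρ ≠ g⁻¹ • σ := fun h => hρσ (by rw [h, smul_inv_smul])
  rw [← smul_inv_smul g σ, ← hequiv g _ hσ' ρ hρσ', Finset.mem_image] at hp
  obtain ⟨q, hq, rfl⟩ := hp
  obtain ⟨v, hvq, hvR⟩ := hconv _ hσ' ρ hρ hρσ' q hq
  exact ⟨g • v, Sym2.mem_map.2 ⟨v, hvq, rfl⟩, g, v, hvR, rfl⟩

end Orbit

theorem invariant_clique_of_equivariant_family_general {V : Type*} [DecidableEq V] {H : Type*}
    [Group H] [MulAction H V]
    (G : SimpleGraph V) (hact : ∀ (h : H) (u v : V), G.Adj (h • u) (h • v) ↔ G.Adj u v)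
    (σ : V) (R : Set V) (hne : R.Nonempty)
    (Pr : V → V → Finset (Sym2 V))
    (hproj : ∀ σ' ∈ MulAction.orbit H σ, IsSigmaProjection G σ' (Pr σ'))
    (hconv : ∀ σ' ∈ MulAction.orbit H σ, PiConvex σ' (Pr σ') R)
    (horbfin : (orbitSet H R).Finite)
    (hequiv : ∀ (h : H), ∀ σ' ∈ MulAction.orbit H σ, ∀ ρ, ρ ≠ σ' →
      (Pr σ' ρ).image (Sym2.map (fun v => h • v)) = Pr (h • σ') (h • ρ)) :
    DismantlableOn G (orbitSet H R) ∧
      ∃ Δ : Set V, Δ.Nonempty ∧ G.IsClique Δ ∧ ∀ h : H, (fun v => h • v) '' Δ = Δ := by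
  have hdis : DismantlableOn G (orbitSet H R) :=
    (hproj σ (MulAction.mem_orbit_self σ)).dismantlableOn_of_piConvex
      (piConvex_orbitSet hconv hequiv) horbfin
  exact ⟨hdis, hdis.exists_invariant_isClique hact (hne.mono subset_orbitSet)
    fun h _ => smul_mem_orbitSet h⟩

/-- Let `H` be a group acting on `Γ` by automorphisms, `σ` a vertex and
`R` a nonempty finite set such that for every `σ'` in the orbit `S = Hσ` there is a
`σ'`-projection `Π_{σ'}` for which `R` is `Π_{σ'}`-convex, the family `{Π_{σ'}}` is
`H`-equivariant, and the orbit set `HR` is finite. Then the subgraph induced on `HR` is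
dismantlable and `Γ` contains an `H`-invariant clique. -/
theorem invariant_clique_of_equivariant_family {V : Type*} [DecidableEq V] {H : Type*}
    [Group H] [MulAction H V]
    (G : SimpleGraph V) (hact : ∀ (h : H) (u v : V), G.Adj (h • u) (h • v) ↔ G.Adj u v)
    (σ : V) (R : Set V) (hfin : R.Finite) (hne : R.Nonempty)
    (Pr : V → V → Finset (Sym2 V))
    (hproj : ∀ σ' ∈ MulAction.orbit H σ, IsSigmaProjection G σ' (Pr σ'))
    (hconv : ∀ σ' ∈ MulAction.orbit H σ, PiConvex σ' (Pr σ') R)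
    (horbfin : (orbitSet H R).Finite)
    (hequiv : ∀ (h : H), ∀ σ' ∈ MulAction.orbit H σ, ∀ ρ, ρ ≠ σ' →
      (Pr σ' ρ).image (Sym2.map (fun v => h • v)) = Pr (h • σ') (h • ρ)) :
    DismantlableOn G (orbitSet H R) ∧
      ∃ Δ : Set V, Δ.Nonempty ∧ G.IsClique Δ ∧ ∀ h : H, (fun v => h • v) '' Δ = Δ :=
  invariant_clique_of_equivariant_family_general G hact σ R hne Pr hproj hconv horbfin hequiv
end

section
/- Let G be a group with a finite symmetric generating set S₀ (not containing the identity) whose Cayley graph is δ-hyperbolic, and let D ≥ 8δ + 1. Let H be a finite subgroup of G. Then for every finite subset S of G there exists a finite subset T of G with S ⊆ T and hT = T for all h ∈ H, such that the subgraph of the 1-skeleton of the Rips complex P_D(G) induced on T is dismantlable. -/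
open SimpleGraph

variable {V : Type*}

/-!
In the Cayley graph, let `C` be the set of quasi-centres of the finite set `H`: the points
minimising the largest distance to `H`. It is finite and `H`-invariant, and thinness of geodesic
triangles bounds its diameter by `4δ + 1`. Take for `T` a sublevel set `{x | d(x, C) ≤ R}`
containing `S`. It is dismantled by removing vertices in order of decreasing distance to `C`: a vertex `ρ` with
`d(ρ, C) ≥ max (2δ) 1` is dominated by the point `max (2δ) 1` steps along a geodesic from `ρ`
towards `C`, and the vertices with `d(·, C) ≤ 2δ` form a clique in the Rips graph because
`2δ + (4δ + 1) + 2δ ≤ D`.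
-/

namespace SimpleGraph

variable {Γ : SimpleGraph V}

theorem Iso.dist_map_le {W : Type*} {Γ' : SimpleGraph W} (φ : Γ ≃g Γ') (u v : V) :
    Γ'.dist (φ u) (φ v) ≤ Γ.dist u v := by
  by_cases h : Γ.Reachable u v
  · obtain ⟨p, hp⟩ := h.exists_walk_length_eq_dist
    simpa [hp] using dist_le (p.map φ.toHom)
  · rw [dist_eq_zero_of_not_reachable (mt Iso.reachable_iff.mp h)]
    exact Nat.zero_le _

theorem Iso.dist_map {W : Type*} {Γ' : SimpleGraph W} (φ : Γ ≃g Γ') (u v : V) :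
    Γ'.dist (φ u) (φ v) = Γ.dist u v :=
  le_antisymm (φ.dist_map_le u v) (by simpa using φ.symm.dist_map_le (φ u) (φ v))

theorem Walk.dist_add_dist_of_mem_support {u v s : V} (p : Γ.Walk u v)
    (hp : p.length = Γ.dist u v) (hs : s ∈ p.support) :
    Γ.dist u s + Γ.dist s v = Γ.dist u v := by
  classical
  have hlen := congrArg Walk.length (p.take_spec hs)
  rw [Walk.length_append] at hlen
  have hu := dist_le (p.takeUntil s hs)
  have hv := dist_le (p.dropUntil s hs)
  have htri := (p.takeUntil s hs).reachable.dist_triangle_left v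
  omega

theorem Reachable.exists_dist_eq_of_le {u v : V} (h : Γ.Reachable u v) {k : ℕ}
    (hk : k ≤ Γ.dist u v) : ∃ t, Γ.dist u t = k ∧ Γ.dist t v = Γ.dist u v - k := by
  obtain ⟨p, hp⟩ := h.exists_walk_length_eq_dist
  refine ⟨p.getVert k, ?_⟩
  have hsum := p.dist_add_dist_of_mem_support hp (p.getVert_mem_support k)
  have hu := dist_le (p.take k)
  have hv := dist_le (p.drop k)
  rw [Walk.take_length] at hu
  rw [Walk.drop_length] at hv
  omega

theorem finite_setOf_exists_walk_length_le (hΓ : ∀ v, (Γ.neighborSet v).Finite) (n : ℕ) (u : V) :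
    {x | ∃ p : Γ.Walk u x, p.length ≤ n}.Finite := by
  induction n generalizing u with
  | zero =>
    refine (Set.finite_singleton u).subset ?_
    rintro x ⟨p, hp⟩
    exact (Walk.eq_of_length_eq_zero (Nat.le_zero.mp hp)).symm
  | succ n ih =>
    refine ((Set.finite_singleton u).union ((hΓ u).biUnion fun u' _ => ih u')).subset ?_
    rintro x ⟨p, hp⟩
    cases p with
    | nil => exact Or.inl rfl
    | cons h q =>
      exact Or.inr (Set.mem_biUnion h ⟨q, by simpa using hp⟩)

theorem Connected.finite_setOf_dist_le (hc : Γ.Connected) (hΓ : ∀ v, (Γ.neighborSet v).Finite)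
    (u : V) (n : ℕ) : {x | Γ.dist u x ≤ n}.Finite :=
  (finite_setOf_exists_walk_length_le hΓ n u).subset fun x hx =>
    let ⟨p, hp⟩ := (hc u x).exists_walk_length_eq_dist
    ⟨p, hp ▸ hx⟩

/-- Junk value `0` when `C` is empty. -/
noncomputable def infDist (Γ : SimpleGraph V) (x : V) (C : Set V) : ℕ := sInf (Γ.dist x '' C)

theorem infDist_le_dist {C : Set V} {x c : V} (hc : c ∈ C) : Γ.infDist x C ≤ Γ.dist x c :=
  Nat.sInf_le ⟨c, hc, rfl⟩

theorem exists_dist_eq_infDist (Γ : SimpleGraph V) {C : Set V} (hC : C.Nonempty) (x : V) :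
    ∃ c ∈ C, Γ.dist x c = Γ.infDist x C :=
  Nat.sInf_mem (hC.image _)

theorem infDist_iso_apply (φ : Γ ≃g Γ) {C : Set V} (hC : ∀ x, φ x ∈ C ↔ x ∈ C) (x : V) :
    Γ.infDist (φ x) C = Γ.infDist x C := by
  unfold infDist
  congr 1
  ext n
  constructor
  · rintro ⟨c, hc, rfl⟩
    exact ⟨φ.symm c, (hC _).mp (by simpa using hc), by rw [← φ.dist_map, φ.apply_symm_apply]⟩
  · rintro ⟨c, hc, rfl⟩
    exact ⟨φ c, (hC c).mpr hc, φ.dist_map x c⟩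

theorem Connected.finite_setOf_infDist_le (hc : Γ.Connected)
    (hΓ : ∀ v, (Γ.neighborSet v).Finite) {C : Set V} (hCfin : C.Finite) (hC : C.Nonempty)
    (r : ℕ) : {x | Γ.infDist x C ≤ r}.Finite := by
  refine (hCfin.biUnion fun c _ => hc.finite_setOf_dist_le hΓ c r).subset fun x hx => ?_
  obtain ⟨c, hcC, hxc⟩ := Γ.exists_dist_eq_infDist hC x
  exact Set.mem_biUnion hcC (by rw [Set.mem_ofPred_eq, dist_comm, hxc]; exact hx)

noncomputable def maxDist (Γ : SimpleGraph V) (A : Finset V) (x : V) : ℕ := A.sup (Γ.dist x)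

def quasiCenters (Γ : SimpleGraph V) (A : Finset V) : Set V :=
  {x | ∀ y, Γ.maxDist A x ≤ Γ.maxDist A y}

theorem dist_le_maxDist (Γ : SimpleGraph V) {A : Finset V} {a : V} (ha : a ∈ A) (x : V) :
    Γ.dist x a ≤ Γ.maxDist A x :=
  Finset.le_sup (f := Γ.dist x) ha

theorem quasiCenters_nonempty [Nonempty V] (A : Finset V) : (Γ.quasiCenters A).Nonempty := by
  obtain ⟨x, hx⟩ := Nat.sInf_mem (Set.range_nonempty (Γ.maxDist A))
  exact ⟨x, fun y => hx ▸ Nat.sInf_le ⟨y, rfl⟩⟩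

theorem Connected.finite_quasiCenters (hc : Γ.Connected) (hΓ : ∀ v, (Γ.neighborSet v).Finite)
    {A : Finset V} {a : V} (ha : a ∈ A) : (Γ.quasiCenters A).Finite :=
  (hc.finite_setOf_dist_le hΓ a (Γ.maxDist A a)).subset fun x hx => by
    rw [Set.mem_ofPred_eq, dist_comm]
    exact (Γ.dist_le_maxDist ha x).trans (hx a)

theorem maxDist_iso_apply (φ : Γ ≃g Γ) {A : Finset V} (hA : ∀ a, φ a ∈ A ↔ a ∈ A) (x : V) :
    Γ.maxDist A (φ x) = Γ.maxDist A x := by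
  apply le_antisymm <;> refine Finset.sup_le fun a ha => ?_
  · rw [← φ.apply_symm_apply a, φ.dist_map]
    exact Γ.dist_le_maxDist ((hA _).mp (by simpa using ha)) x
  · rw [← φ.dist_map]
    exact Γ.dist_le_maxDist ((hA a).mpr ha) _

theorem iso_apply_mem_quasiCenters (φ : Γ ≃g Γ) {A : Finset V} (hA : ∀ a, φ a ∈ A ↔ a ∈ A)
    (x : V) : φ x ∈ Γ.quasiCenters A ↔ x ∈ Γ.quasiCenters A := by
  simp only [quasiCenters, Set.mem_ofPred_eq, maxDist_iso_apply φ hA]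

section Cayley

variable {G : Type*} [Group G] (s : Set G)

theorem fromRel_inv_mul_mem_eq_mulCayley :
    fromRel (fun g h : G => g⁻¹ * h ∈ s) = mulCayley s := by
  ext u v
  rw [fromRel_adj, mulCayley_adj]

def mulCayleyMulLeftIso (a : G) : mulCayley s ≃g mulCayley s where
  toEquiv := Equiv.mulLeft a
  map_rel_iff' := mulCayley_adj_mul_iff_right

theorem mulCayley_connected (hs : Subgroup.closure s = ⊤) : (mulCayley s).Connected := by
  have hmul : ∀ a {u v : G}, (mulCayley s).Reachable u v →
      (mulCayley s).Reachable (a * u) (a * v) := fun a _ _ h =>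
    (Iso.reachable_iff (φ := mulCayleyMulLeftIso s a)).mpr h
  have hone : ∀ g, (mulCayley s).Reachable 1 g := fun g => by
    induction (hs ▸ Subgroup.mem_top g : g ∈ Subgroup.closure s) using
      Subgroup.closure_induction with
    | mem x hx =>
      by_cases h : x = 1
      · rw [h]
      · exact ((mulCayley_adj s 1 x).mpr ⟨Ne.symm h, Or.inl (by simpa using hx)⟩).reachable
    | one => rfl
    | mul x y _ _ hx hy => exact hx.trans (by simpa using hmul x hy)
    | inv x _ hx => simpa using (hmul x⁻¹ hx).symm
  have : Nonempty G := ⟨1⟩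
  exact Connected.mk fun u v => (hone u).symm.trans (hone v)

theorem mulCayley_neighborSet_finite (hs : s.Finite) (u : G) :
    ((mulCayley s).neighborSet u).Finite := by
  refine ((hs.union hs.inv).image (u * ·)).subset fun v hv => ?_
  rw [mem_neighborSet, mulCayley_adj] at hv
  refine ⟨u⁻¹ * v, ?_, by group⟩
  rcases hv.2 with h | h
  · exact Or.inl h
  · exact Or.inr (by simpa using h)

end Cayley

end SimpleGraph

section Dismantling

variable {Γ : SimpleGraph V} (f : V → ℕ) (r : ℕ)

theorem DismantlableOn.of_diff_singleton {T : Set V} {ρ : V} (hρ : ρ ∈ T)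
    (h : DismantlableOn Γ (T \ {ρ})) (hdom : (T \ {ρ}).Nonempty → ∃ π, DominatedIn Γ T ρ π) :
    DismantlableOn Γ T := by
  obtain ⟨l, hnd, hmem, hl⟩ := h
  have hmem' : ∀ v, v ∈ ρ :: l ↔ v ∈ T := fun v => by
    rw [List.mem_cons, hmem]
    by_cases hv : v = ρ <;> simp [hv, hρ]
  refine ⟨ρ :: l, List.nodup_cons.mpr ⟨fun h => ((hmem ρ).mp h).2 rfl, hnd⟩, hmem', ?_⟩
  rintro (_ | i) hi hi'
  · obtain ⟨π, hπ⟩ := hdom ⟨l[0]'(by simp at hi'; omega), (hmem _).mp (List.getElem_mem _)⟩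
    have hT : {w | w ∈ (ρ :: l).drop 0} = T := Set.ext hmem'
    exact ⟨π, by rw [hT]; exact hπ⟩
  · simpa using hl i (by simpa using hi) (by simp at hi'; omega)

theorem exists_dominatedIn_of_potential (hlow : ∀ x y, f x < r → f y < r → x ≠ y → Γ.Adj x y)
    (hhigh : ∀ ρ, r ≤ f ρ →
      ∃ π, f π < f ρ ∧ ∀ w ∈ closedNbhd Γ ρ, f w ≤ f ρ → w ∈ closedNbhd Γ π)
    {T : Set V} (hdown : ∀ x ∈ T, ∀ y, f y < f x → y ∈ T) {ρ y : V} (hρ : ρ ∈ T)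
    (hmax : ∀ x ∈ T, f x ≤ f ρ) (hy : y ∈ T) (hyρ : y ≠ ρ) : ∃ π, DominatedIn Γ T ρ π := by
  by_cases hr : r ≤ f ρ
  · obtain ⟨π, hπρ, hπ⟩ := hhigh ρ hr
    exact ⟨π, hdown ρ hρ π hπρ, fun h => (h ▸ hπρ).false, fun w hw hwρ => hπ w hwρ (hmax w hw)⟩
  · refine ⟨y, hy, hyρ, fun w hw _ => ?_⟩
    by_cases hwy : w = y
    · exact hwy ▸ Set.mem_insert w _
    · have := hmax y hy
      have := hmax w hw
      exact Set.mem_insert_of_mem _ (hlow y w (by omega) (by omega) (Ne.symm hwy))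

theorem dismantlableOn_of_potential (hlow : ∀ x y, f x < r → f y < r → x ≠ y → Γ.Adj x y)
    (hhigh : ∀ ρ, r ≤ f ρ →
      ∃ π, f π < f ρ ∧ ∀ w ∈ closedNbhd Γ ρ, f w ≤ f ρ → w ∈ closedNbhd Γ π)
    {T : Set V} (hT : T.Finite) (hdown : ∀ x ∈ T, ∀ y, f y < f x → y ∈ T) :
    DismantlableOn Γ T := by
  classical
  obtain ⟨F, rfl⟩ := hT.exists_finset_coe
  clear hT
  induction F using Finset.strongInduction with
  | H F ih =>
  rcases F.eq_empty_or_nonempty with rfl | hF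
  · exact ⟨[], by simp, by simp, by simp⟩
  obtain ⟨ρ, hρ, hmax⟩ := F.exists_max_image f hF
  refine DismantlableOn.of_diff_singleton hρ ?_ fun ⟨y, hy, hyρ⟩ =>
    exists_dominatedIn_of_potential f r hlow hhigh hdown hρ hmax hy hyρ
  rw [← Finset.coe_erase]
  refine ih _ (Finset.erase_ssubset hρ) fun x hx y hy => ?_
  rw [Finset.mem_coe, Finset.mem_erase] at hx ⊢
  exact ⟨fun h => (h ▸ hy).not_ge (hmax x hx.2), hdown x hx.2 y hy⟩

end Dismantling

section Hyperbolic

variable {Γ : SimpleGraph V} {δ : ℕ} {C : Set V}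

theorem Hyperbolic.dist_add_le_or (hΓ : Hyperbolic Γ δ) (hc : Γ.Connected) {u v t : V}
    (ht : Γ.dist u t + Γ.dist t v = Γ.dist u v) (w : V) :
    Γ.dist t w + Γ.dist t v ≤ 2 * δ + Γ.dist v w ∨
      Γ.dist t w + Γ.dist u t ≤ 2 * δ + Γ.dist u w := by
  obtain ⟨p₁, hp₁⟩ := (hc u t).exists_walk_length_eq_dist
  obtain ⟨p₂, hp₂⟩ := (hc t v).exists_walk_length_eq_dist
  obtain ⟨q, hq⟩ := (hc v w).exists_walk_length_eq_dist
  obtain ⟨r, hr⟩ := (hc w u).exists_walk_length_eq_dist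
  have hp : IsGeodesic Γ (p₁.append p₂) := by
    rw [IsGeodesic, Walk.length_append]
    omega
  obtain ⟨s, hs, hts⟩ := hΓ u v w _ q r hp hq hr t (by simp)
  have htw : Γ.dist t w ≤ Γ.dist t s + Γ.dist s w := hc.dist_triangle
  rcases hs with hs | hs
  · have hvw := q.dist_add_dist_of_mem_support hq hs
    have hvt : Γ.dist v t ≤ Γ.dist v s + Γ.dist s t := hc.dist_triangle
    rw [dist_comm (u := v) (v := t), dist_comm (u := s) (v := t)] at hvt
    omega
  · have hwu := r.dist_add_dist_of_mem_support hr hs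
    have hut : Γ.dist u t ≤ Γ.dist u s + Γ.dist s t := hc.dist_triangle
    rw [dist_comm (u := s) (v := t), dist_comm (u := u) (v := s)] at hut
    rw [dist_comm (u := s) (v := w)] at htw
    rw [dist_comm (u := u) (v := w)]
    omega

theorem Hyperbolic.dist_le_of_mem_quasiCenters (hΓ : Hyperbolic Γ δ) (hc : Γ.Connected)
    {A : Finset V} (hA : A.Nonempty) {x y : V} (hx : x ∈ Γ.quasiCenters A)
    (hy : y ∈ Γ.quasiCenters A) : Γ.dist x y ≤ 4 * δ + 1 := by
  obtain ⟨z, hxz, hzy⟩ := (hc x y).exists_dist_eq_of_le (k := (Γ.dist x y + 1) / 2) (by omega)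
  have hz : Γ.maxDist A z + Γ.dist x y / 2 ≤ 2 * δ + Γ.maxDist A x := by
    obtain ⟨a, ha, hza⟩ := Finset.exists_mem_eq_sup A hA (Γ.dist z)
    have hxa := Γ.dist_le_maxDist ha x
    have hya := Γ.dist_le_maxDist ha y
    have hxy := hy x
    rw [maxDist, hza]
    rcases hΓ.dist_add_le_or hc (u := x) (v := y) (t := z) (by omega) a with h | h <;> omega
  have := hx z
  omega

theorem Hyperbolic.dist_le_one_of_zero (hΓ : Hyperbolic Γ 0) (hc : Γ.Connected)
    (hCdiam : ∀ x ∈ C, ∀ y ∈ C, Γ.dist x y ≤ 1) {c ρ π w : V} (hcC : c ∈ C)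
    (hρc : Γ.dist ρ c = Γ.infDist ρ C) (hρπ : Γ.dist ρ π = 1)
    (hπc : Γ.dist π c + 1 = Γ.dist ρ c) (hρw : Γ.dist ρ w ≤ 1)
    (hw : Γ.infDist w C ≤ Γ.infDist ρ C) (hπw : Γ.dist c π + Γ.dist π w ≤ Γ.dist c w) :
    Γ.dist π w ≤ 1 := by
  obtain ⟨c', hc'C, hwc'⟩ := Γ.exists_dist_eq_infDist ⟨c, hcC⟩ w
  have hρc' : Γ.infDist ρ C ≤ Γ.dist ρ c' := infDist_le_dist hc'C
  have hcc' := hCdiam c hcC c' hc'C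
  have hcw : Γ.dist c w ≤ Γ.dist c π + Γ.dist π w := hc.dist_triangle
  have hρc'' : Γ.dist ρ c' ≤ Γ.dist ρ π + Γ.dist π c' := hc.dist_triangle
  have hπw' : Γ.dist π w ≤ Γ.dist π ρ + Γ.dist ρ w := hc.dist_triangle
  have hcw' : Γ.dist c w ≤ Γ.dist c c' + Γ.dist c' w := hc.dist_triangle
  have e₁ := SimpleGraph.dist_comm (G := Γ) (u := c) (v := π)
  have e₂ := SimpleGraph.dist_comm (G := Γ) (u := π) (v := ρ)
  have e₃ := SimpleGraph.dist_comm (G := Γ) (u := w) (v := c')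
  rcases hΓ.dist_add_le_or hc (u := c) (v := w) (t := π) (by omega) c' with h | h
  · omega
  -- Here `π = c` and `ρ` is adjacent to `c`; if `w` were at distance 2 from `c`, then `c'`
  -- would be a second midpoint of `c` and `w`, which 0-hyperbolicity forces to be `ρ`.
  by_contra hπw₂
  have e₄ := SimpleGraph.dist_comm (G := Γ) (u := c') (v := ρ)
  have e₅ := SimpleGraph.dist_comm (G := Γ) (u := w) (v := ρ)
  have e₆ := SimpleGraph.dist_comm (G := Γ) (u := c) (v := ρ)
  rcases hΓ.dist_add_le_or hc (u := c) (v := w) (t := c') (by omega) ρ with h' | h' <;> omega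

theorem Hyperbolic.exists_dominating (hΓ : Hyperbolic Γ δ) (hc : Γ.Connected) {D : ℕ}
    (hD : 8 * δ + 1 ≤ D) (hC : C.Nonempty) (hCdiam : ∀ x ∈ C, ∀ y ∈ C, Γ.dist x y ≤ 4 * δ + 1)
    {ρ : V} (hρ : max (2 * δ) 1 ≤ Γ.infDist ρ C) :
    ∃ π, Γ.infDist π C < Γ.infDist ρ C ∧
      ∀ w, Γ.dist ρ w ≤ D → Γ.infDist w C ≤ Γ.infDist ρ C → Γ.dist π w ≤ D := by
  obtain ⟨c, hcC, hρc⟩ := Γ.exists_dist_eq_infDist hC ρ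
  obtain ⟨π, hρπ, hπc⟩ := (hc ρ c).exists_dist_eq_of_le (k := max (2 * δ) 1) (hρc ▸ hρ)
  refine ⟨π, (infDist_le_dist hcC).trans_lt (by omega), fun w hρw hw => ?_⟩
  obtain ⟨c', hc'C, hwc'⟩ := Γ.exists_dist_eq_infDist hC w
  have hcw : Γ.dist c w ≤ Γ.dist c c' + Γ.dist c' w := hc.dist_triangle
  have hcc' := hCdiam c hcC c' hc'C
  have e₁ := SimpleGraph.dist_comm (G := Γ) (u := c) (v := π)
  have e₂ := SimpleGraph.dist_comm (G := Γ) (u := π) (v := ρ)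
  have e₃ := SimpleGraph.dist_comm (G := Γ) (u := w) (v := c')
  have e₄ := SimpleGraph.dist_comm (G := Γ) (u := c) (v := ρ)
  rcases hΓ.dist_add_le_or hc (u := c) (v := ρ) (t := π) (by omega) w with h | h
  · omega
  -- This branch gives `dist π w ≤ 6δ + 1 + max (2δ) 1`, which is `≤ D` unless `δ = 0, D = 1`.
  · by_cases hδD : δ = 0 ∧ D = 1
    · obtain ⟨rfl, rfl⟩ := hδD
      exact hΓ.dist_le_one_of_zero hc hCdiam hcC hρc (by omega) (by omega) hρw hw (by omega)
    · omega

theorem mem_closedNbhd_ripsGraph {D : ℕ} {ρ w : V} :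
    w ∈ closedNbhd (ripsGraph Γ D) ρ ↔ Γ.dist ρ w ≤ D := by
  by_cases h : w = ρ
  · subst h
    simp [closedNbhd]
  · simp [closedNbhd, ripsGraph, h, Ne.symm h]

theorem Hyperbolic.dismantlableOn_ripsGraph (hΓ : Hyperbolic Γ δ) (hc : Γ.Connected) {D : ℕ}
    (hD : 8 * δ + 1 ≤ D) (hC : C.Nonempty)
    (hCdiam : ∀ x ∈ C, ∀ y ∈ C, Γ.dist x y ≤ 4 * δ + 1) {T : Set V} (hT : T.Finite)
    (hdown : ∀ x ∈ T, ∀ y, Γ.infDist y C < Γ.infDist x C → y ∈ T) :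
    DismantlableOn (ripsGraph Γ D) T := by
  refine dismantlableOn_of_potential (Γ := ripsGraph Γ D) (Γ.infDist · C) (max (2 * δ) 1)
    (fun x y hx hy hxy => ⟨hxy, ?_⟩) (fun ρ hρ => ?_) hT hdown
  · obtain ⟨c, hcC, hxc⟩ := Γ.exists_dist_eq_infDist hC x
    obtain ⟨c', hc'C, hyc'⟩ := Γ.exists_dist_eq_infDist hC y
    have hxy : Γ.dist x y ≤ Γ.dist x c + Γ.dist c y := hc.dist_triangle
    have hcy : Γ.dist c y ≤ Γ.dist c c' + Γ.dist c' y := hc.dist_triangle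
    have := hCdiam c hcC c' hc'C
    have := SimpleGraph.dist_comm (G := Γ) (u := c') (v := y)
    omega
  · obtain ⟨π, hπ, hdom⟩ := hΓ.exists_dominating hc hD hC hCdiam hρ
    refine ⟨π, hπ, fun w hw hwρ => ?_⟩
    rw [mem_closedNbhd_ripsGraph] at hw ⊢
    exact hdom w hw hwρ

end Hyperbolic

theorem rips_complex_invariant_dismantlable_subgraph_general {G : Type*} [Group G]
    (S₀ : Finset G)
    (hgen : Subgroup.closure (S₀ : Set G) = ⊤)
    (δ : ℕ) (hhyp : Hyperbolic (SimpleGraph.fromRel fun g h : G => g⁻¹ * h ∈ S₀) δ)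
    (D : ℕ) (hD : 8 * δ + 1 ≤ D)
    (H : Subgroup G) (hHfin : (H : Set G).Finite)
    (S : Set G) (hSfin : S.Finite) :
    ∃ T : Set G, T.Finite ∧ S ⊆ T ∧ (∀ h ∈ H, (fun g => h * g) '' T = T) ∧
      DismantlableOn (ripsGraph (SimpleGraph.fromRel fun g h : G => g⁻¹ * h ∈ S₀) D) T := by
  rw [show (fromRel fun g h : G => g⁻¹ * h ∈ S₀) = mulCayley (S₀ : Set G) from
    fromRel_inv_mul_mem_eq_mulCayley _] at hhyp ⊢
  set Γ := mulCayley (S₀ : Set G)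
  have hc : Γ.Connected := mulCayley_connected _ hgen
  have hΓ := mulCayley_neighborSet_finite _ S₀.finite_toSet
  set A := hHfin.toFinset
  have h1A : (1 : G) ∈ A := by simp [A]
  have hAinv : ∀ h ∈ H, ∀ a, h * a ∈ A ↔ a ∈ A := fun h hh a => by
    simp [A, Subgroup.mul_mem_cancel_left H hh]
  set C := Γ.quasiCenters A
  have hC : C.Nonempty := quasiCenters_nonempty A
  have hCfin : C.Finite := hc.finite_quasiCenters hΓ h1A
  have hCdiam : ∀ x ∈ C, ∀ y ∈ C, Γ.dist x y ≤ 4 * δ + 1 := fun x hx y hy =>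
    hhyp.dist_le_of_mem_quasiCenters hc ⟨1, h1A⟩ hx hy
  have hCinv : ∀ h ∈ H, ∀ x, Γ.infDist (h * x) C = Γ.infDist x C := fun h hh =>
    infDist_iso_apply (mulCayleyMulLeftIso _ h)
      (iso_apply_mem_quasiCenters (mulCayleyMulLeftIso _ h) (hAinv h hh))
  set R := hSfin.toFinset.sup (Γ.infDist · C)
  have hT := hc.finite_setOf_infDist_le hΓ hCfin hC R
  refine ⟨{x | Γ.infDist x C ≤ R}, hT,
    fun x hx => Finset.le_sup (f := (Γ.infDist · C)) (hSfin.mem_toFinset.mpr hx),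
    fun h hh => ?_,
    hhyp.dismantlableOn_ripsGraph hc hD hC hCdiam hT fun x hx y hy => hy.le.trans hx⟩
  ext x
  rw [Set.image_mul_left, Set.mem_preimage, Set.mem_ofPred_eq, Set.mem_ofPred_eq,
    hCinv h⁻¹ (H.inv_mem hh)]

/-- (Lemma 9.2.) Let `G` be a group with a finite symmetric generating
set `S₀` (not containing the identity) whose Cayley graph is `δ`-hyperbolic, let
`D ≥ 8δ + 1`, and let `H` be a finite subgroup of `G`. Then every finite subset `S` of
`G` is contained in a finite `H`-invariant subset `T` such that the subgraph of the
1-skeleton of the Rips complex `P_D(G)` induced on `T` is dismantlable. -/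
theorem rips_complex_invariant_dismantlable_subgraph {G : Type*} [Group G]
    (S₀ : Finset G) (hsym : ∀ s ∈ S₀, s⁻¹ ∈ S₀) (hone : (1 : G) ∉ S₀)
    (hgen : Subgroup.closure (S₀ : Set G) = ⊤)
    (δ : ℕ) (hhyp : Hyperbolic (SimpleGraph.fromRel fun g h : G => g⁻¹ * h ∈ S₀) δ)
    (D : ℕ) (hD : 8 * δ + 1 ≤ D)
    (H : Subgroup G) (hHfin : (H : Set G).Finite)
    (S : Set G) (hSfin : S.Finite) :
    ∃ T : Set G, T.Finite ∧ S ⊆ T ∧ (∀ h ∈ H, (fun g => h * g) '' T = T) ∧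
      DismantlableOn (ripsGraph (SimpleGraph.fromRel fun g h : G => g⁻¹ * h ∈ S₀) D) T :=
  rips_complex_invariant_dismantlable_subgraph_general S₀ hgen δ hhyp D hD H hHfin S hSfin
end
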